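/- arXiv:1412.7874 — 3 statements merged into one kernel-verified Lean document; each statement's English description precedes it below -/
import Mathlib

section
/- With f_K(x) = 1/(π(1-x^2)√(1-2x^2)) on (-1/√2, 1/√2), one has ∫_{-1/√2}^{1/√2} (1-x) f_K(x) dx = 1. -/
/-!
The integrand is `f_K - x f_K`. Since `f_K` is even, `x f_K` is odd and integrates to `0` over the
symmetric interval, while `f_K` has the primitive `1/2 + arcsin (x / √(1 - x²)) / π`, which runs
from `0` to `1` on `[-1/√2, 1/√2]`. The density blows up at the endpoints; it is integrable there
because it is the nonnegative derivative of a function continuous on the closed interval.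
-/

open Real Set MeasureTheory

theorem integral_symm_eq_zero_of_odd {E : Type*} [NormedAddCommGroup E] [NormedSpace ℝ E]
    {f : ℝ → E} (hf : ∀ x, f (-x) = -f x) (a : ℝ) : ∫ x in -a..a, f x = 0 := by
  have h : ∫ x in -a..a, f x = -∫ x in -a..a, f x := by
    calc ∫ x in -a..a, f x = ∫ x in -a..a, f (-x) := by
          rw [intervalIntegral.integral_comp_neg, neg_neg]
      _ = -∫ x in -a..a, f x := by simp only [hf, intervalIntegral.integral_neg]
  have h2 : (2 : ℝ) • ∫ x in -a..a, f x = 0 := by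
    rw [two_smul]
    nth_rewrite 2 [h]
    exact add_neg_cancel _
  exact (smul_eq_zero.mp h2).resolve_left two_ne_zero

lemma hasDerivAt_div_sqrt_one_sub_sq {x : ℝ} (hx : x ^ 2 < 1) :
    HasDerivAt (fun y => y / √(1 - y ^ 2)) (1 / ((1 - x ^ 2) * √(1 - x ^ 2))) x := by
  have hpos : 0 < 1 - x ^ 2 := by linarith
  have hsqrt : HasDerivAt (fun y => √(1 - y ^ 2)) (-x / √(1 - x ^ 2)) x := by
    refine (((hasDerivAt_pow 2 x).const_sub 1).sqrt hpos.ne').congr_deriv ?_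
    ring
  refine ((hasDerivAt_id' x).div hsqrt (sqrt_pos.2 hpos).ne').congr_deriv ?_
  have hs := (sqrt_pos.2 hpos).ne'
  field_simp
  rw [sq_sqrt hpos.le]
  ring

lemma one_sub_sq_div_sqrt_one_sub_sq {x : ℝ} (hx : x ^ 2 < 1) :
    1 - (x / √(1 - x ^ 2)) ^ 2 = (1 - 2 * x ^ 2) / (1 - x ^ 2) := by
  have hpos : 0 < 1 - x ^ 2 := by linarith
  rw [div_pow, sq_sqrt hpos.le]
  field_simp
  ring

noncomputable def hadamardDensity (x : ℝ) : ℝ :=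
  1 / (π * (1 - x ^ 2) * √(1 - 2 * x ^ 2))

-- The `arcsin` form (rather than `arctan (x / √(1 - 2 x²))`) keeps it continuous at `±1/√2`.
noncomputable def hadamardCDF (x : ℝ) : ℝ :=
  1 / 2 + arcsin (x / √(1 - x ^ 2)) / π

lemma hadamardDensity_neg (x : ℝ) : hadamardDensity (-x) = hadamardDensity x := by
  simp only [hadamardDensity, neg_sq]

lemma hadamardDensity_nonneg {x : ℝ} (hx : x ^ 2 ≤ 1) : 0 ≤ hadamardDensity x := by
  have : 0 ≤ 1 - x ^ 2 := by linarith
  unfold hadamardDensity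
  positivity

lemma hasDerivAt_hadamardCDF {x : ℝ} (hx : 2 * x ^ 2 < 1) :
    HasDerivAt hadamardCDF (hadamardDensity x) x := by
  have hx1 : x ^ 2 < 1 := by nlinarith
  have hpos : 0 < 1 - x ^ 2 := by linarith
  have hpos2 : 0 < 1 - 2 * x ^ 2 := by linarith
  have hu : (x / √(1 - x ^ 2)) ^ 2 < 1 := by
    have := one_sub_sq_div_sqrt_one_sub_sq hx1
    have : 0 < (1 - 2 * x ^ 2) / (1 - x ^ 2) := by positivity
    linarith
  have hne : x / √(1 - x ^ 2) ≠ -1 ∧ x / √(1 - x ^ 2) ≠ 1 := by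
    constructor <;> rintro h <;> rw [h] at hu <;> norm_num at hu
  have harcsin := (hasDerivAt_arcsin hne.1 hne.2).comp x (hasDerivAt_div_sqrt_one_sub_sq hx1)
  refine ((harcsin.div_const π).const_add (1 / 2)).congr_deriv ?_
  rw [one_sub_sq_div_sqrt_one_sub_sq hx1, sqrt_div' _ hpos.le, hadamardDensity]
  have := (sqrt_pos.2 hpos).ne'
  have := (sqrt_pos.2 hpos2).ne'
  field_simp

lemma hadamardCDF_neg (x : ℝ) : hadamardCDF (-x) = 1 - hadamardCDF x := by
  simp only [hadamardCDF, neg_sq, neg_div, arcsin_neg]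
  ring

lemma hadamardCDF_one_div_sqrt_two : hadamardCDF (1 / √2) = 1 := by
  have h : √(1 - (1 / √2) ^ 2) = 1 / √2 := by
    rw [div_pow, sq_sqrt zero_le_two, one_pow, show (1 : ℝ) - 1 / 2 = 1 / 2 by norm_num,
      sqrt_div' _ zero_le_two, sqrt_one]
  rw [hadamardCDF, h, div_self (by positivity), arcsin_one]
  field_simp
  norm_num

lemma continuousOn_hadamardCDF : ContinuousOn hadamardCDF (Ioo (-1) 1) := by
  refine continuousOn_const.add (ContinuousOn.div_const ?_ _)
  refine continuous_arcsin.comp_continuousOn (continuousOn_id.div (by fun_prop) ?_)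
  intro x hx
  have : x ^ 2 < 1 := by rw [sq_lt_one_iff_abs_lt_one, abs_lt]; exact hx
  exact (sqrt_pos.2 (by linarith)).ne'

lemma two_mul_sq_lt_one_of_mem_Ioo {x : ℝ} (hx : x ∈ Ioo (-(1 / √2)) (1 / √2)) :
    2 * x ^ 2 < 1 := by
  have h := sq_lt_sq' hx.1 hx.2
  rw [div_pow, one_pow, sq_sqrt zero_le_two] at h
  linarith

lemma Icc_one_div_sqrt_two_subset_Ioo : Icc (-(1 / √2)) (1 / √2) ⊆ Ioo (-1) 1 := by
  have h : 1 / √2 < 1 := (div_lt_one (by positivity)).2 one_lt_sqrt_two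
  exact Icc_subset_Ioo (neg_lt_neg h) h

lemma intervalIntegrable_hadamardDensity :
    IntervalIntegrable hadamardDensity volume (-(1 / √2)) (1 / √2) := by
  rw [intervalIntegrable_iff_integrableOn_Ioc_of_le (neg_le_self (by positivity))]
  refine intervalIntegral.integrableOn_deriv_of_nonneg
    (continuousOn_hadamardCDF.mono Icc_one_div_sqrt_two_subset_Ioo)
    (fun x hx => hasDerivAt_hadamardCDF (two_mul_sq_lt_one_of_mem_Ioo hx)) fun x hx => ?_
  have := two_mul_sq_lt_one_of_mem_Ioo hx
  exact hadamardDensity_nonneg (by nlinarith)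

theorem integral_hadamardDensity : ∫ x in -(1 / √2)..1 / √2, hadamardDensity x = 1 := by
  rw [intervalIntegral.integral_eq_sub_of_hasDerivAt_of_le (neg_le_self (by positivity))
    (continuousOn_hadamardCDF.mono Icc_one_div_sqrt_two_subset_Ioo)
    (fun x hx => hasDerivAt_hadamardCDF (two_mul_sq_lt_one_of_mem_Ioo hx))
    intervalIntegrable_hadamardDensity, hadamardCDF_neg, hadamardCDF_one_div_sqrt_two, sub_self,
    sub_zero]

theorem hadamard_weight_integral :
    ∫ x in (-(1 / Real.sqrt 2))..(1 / Real.sqrt 2),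
      (1 - x) * (1 / (π * (1 - x^2) * Real.sqrt (1 - 2 * x^2))) = 1 := by
  have hint := intervalIntegrable_hadamardDensity
  have hodd : ∫ x in -(1 / √2)..1 / √2, x * hadamardDensity x = 0 :=
    integral_symm_eq_zero_of_odd (fun x => by rw [hadamardDensity_neg, neg_mul]) _
  calc ∫ x in -(1 / √2)..1 / √2, (1 - x) * (1 / (π * (1 - x ^ 2) * √(1 - 2 * x ^ 2)))
      = ∫ x in -(1 / √2)..1 / √2, hadamardDensity x - x * hadamardDensity x := by
        simp only [sub_mul, one_mul, hadamardDensity]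
    _ = 1 := by
        rw [intervalIntegral.integral_sub hint (hint.continuousOn_mul (continuousOn_id' _)),
          integral_hadamardDensity, hodd, sub_zero]
end

section
/- Let w(x) = 3x^2/(4+x^2) and f_K(x) = 1/(π(1−x^2)√(1−2x^2)) on (−1/√2, 1/√2). Then ∫_{−1/√2}^{1/√2} w(x) f_K(x) dx = 1/5. -/
/-!
Partial fractions split the integrand as
`w / (1 - x²) = (3/5) / (1 - x²) - (12/5) / (4 + x²)`, and both pieces are of the form
`s / ((s² (1 - 2x²) + x²) √(1 - 2x²))` (with `s = 1` and `s = 2/3`), whose primitive is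
`arcsin (x / √(s² (1 - 2x²) + x²))`. This primitive stays continuous up to `x = ±1/√2`, where it
equals `±π/2` whatever `s` is, so the integral is `(3 - 2) (π/2 - (-π/2)) / (5π) = 1/5`.
Integrability of the singular integrand comes for free because it is a nonnegative derivative.
-/

open Real Set intervalIntegral

theorem inv_sqrt_two_sq : (1 / √2 : ℝ) ^ 2 = 1 / 2 := by
  rw [div_pow, sq_sqrt zero_le_two, one_pow]

theorem Icc_neg_inv_sqrt_two_eq : Icc (-(1 / √2)) (1 / √2) = {x : ℝ | 2 * x ^ 2 ≤ 1} := by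
  ext x
  rw [mem_Icc, ← abs_le, mem_ofPred_eq, ← abs_of_pos (by positivity : (0 : ℝ) < 1 / √2),
    ← sq_le_sq, inv_sqrt_two_sq]
  constructor <;> intro h <;> linarith

theorem Ioo_neg_inv_sqrt_two_eq : Ioo (-(1 / √2)) (1 / √2) = {x : ℝ | 2 * x ^ 2 < 1} := by
  ext x
  rw [mem_Ioo, ← abs_lt, mem_ofPred_eq, ← abs_of_pos (by positivity : (0 : ℝ) < 1 / √2),
    ← sq_lt_sq, inv_sqrt_two_sq]
  constructor <;> intro h <;> linarith

noncomputable def arcsinDivSqrt (s x : ℝ) : ℝ := arcsin (x / √(s ^ 2 * (1 - 2 * x ^ 2) + x ^ 2))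

theorem arcsinDivSqrt_neg (s x : ℝ) : arcsinDivSqrt s (-x) = -arcsinDivSqrt s x := by
  simp only [arcsinDivSqrt, neg_sq, neg_div, arcsin_neg]

theorem arcsinDivSqrt_inv_sqrt_two (s : ℝ) : arcsinDivSqrt s (1 / √2) = π / 2 := by
  rw [arcsinDivSqrt, inv_sqrt_two_sq, show s ^ 2 * (1 - 2 * (1 / 2)) + 1 / 2 = (1 / √2 : ℝ) ^ 2 by
    rw [inv_sqrt_two_sq]; ring, sqrt_sq (by positivity), div_self (by positivity), arcsin_one]

theorem continuousOn_arcsinDivSqrt {s : ℝ} (hs : s ≠ 0) :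
    ContinuousOn (arcsinDivSqrt s) {x | 2 * x ^ 2 ≤ 1} := by
  refine continuous_arcsin.comp_continuousOn
    (continuousOn_id.div (by fun_prop) fun x hx => ?_)
  have hx : 2 * x ^ 2 ≤ 1 := hx
  rcases eq_or_ne x 0 with rfl | hx0
  · simp [sqrt_sq_eq_abs, hs]
  · have : 0 < x ^ 2 := by positivity
    exact (sqrt_pos.2 (by nlinarith [sq_nonneg s])).ne'

theorem hasDerivAt_arcsinDivSqrt {s x : ℝ} (hs : 0 < s) (hx : 2 * x ^ 2 < 1) :
    HasDerivAt (arcsinDivSqrt s)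
      (s / ((s ^ 2 * (1 - 2 * x ^ 2) + x ^ 2) * √(1 - 2 * x ^ 2))) x := by
  have hε : 0 < 1 - 2 * x ^ 2 := by linarith
  have hsε : 0 < s ^ 2 * (1 - 2 * x ^ 2) := by positivity
  have hD : 0 < s ^ 2 * (1 - 2 * x ^ 2) + x ^ 2 := by positivity
  have hD' : HasDerivAt (fun y => s ^ 2 * (1 - 2 * y ^ 2) + y ^ 2)
      (2 * (1 - 2 * s ^ 2) * x) x := by
    refine ((((hasDerivAt_pow 2 x).const_mul 2).const_sub 1).const_mul (s ^ 2)).add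
      (hasDerivAt_pow 2 x) |>.congr_deriv ?_
    push_cast
    ring
  have hu : HasDerivAt (fun y => y / √(s ^ 2 * (1 - 2 * y ^ 2) + y ^ 2)) _ x :=
    (hasDerivAt_id x).div (hD'.sqrt hD.ne') (sqrt_pos.2 hD).ne'
  have hu1 : |x / √(s ^ 2 * (1 - 2 * x ^ 2) + x ^ 2)| < 1 := by
    rw [← sq_lt_one_iff_abs_lt_one, div_pow, sq_sqrt hD.le, div_lt_one hD]
    linarith
  refine ((hasDerivAt_arcsin (abs_lt.1 hu1).1.ne' (abs_lt.1 hu1).2.ne).comp x hu).congr_deriv ?_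
  generalize hr : √(s ^ 2 * (1 - 2 * x ^ 2) + x ^ 2) = r
  generalize hD0 : s ^ 2 * (1 - 2 * x ^ 2) + x ^ 2 = D at hD
  have hrD : r ^ 2 = D := by rw [← hr, sq_sqrt (by positivity), hD0]
  have hr0 : 0 < r := by rw [← hr]; positivity
  have hroot : √(1 - (x / r) ^ 2) = s * √(1 - 2 * x ^ 2) / r := by
    rw [← sqrt_sq (by positivity : 0 ≤ s * √(1 - 2 * x ^ 2) / r)]
    congr 1
    rw [div_pow, div_pow, mul_pow, hrD, sq_sqrt hε.le]
    field_simp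
    linear_combination -hD0
  rw [hroot]
  have : 0 < √(1 - 2 * x ^ 2) := sqrt_pos.2 hε
  field_simp
  simp only [id]
  linear_combination (D - s ^ 2) * hrD - D * hD0

noncomputable def wojcikPrimitive (x : ℝ) : ℝ :=
  (3 * arcsinDivSqrt 1 x - 2 * arcsinDivSqrt (2 / 3) x) / (5 * π)

theorem continuousOn_wojcikPrimitive : ContinuousOn wojcikPrimitive {x | 2 * x ^ 2 ≤ 1} :=
  ((continuousOn_const.mul (continuousOn_arcsinDivSqrt one_ne_zero)).sub
    (continuousOn_const.mul (continuousOn_arcsinDivSqrt (s := 2 / 3) (by norm_num)))).div_const _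

theorem hasDerivAt_wojcikPrimitive {x : ℝ} (hx : 2 * x ^ 2 < 1) :
    HasDerivAt wojcikPrimitive
      (3 * x ^ 2 / (4 + x ^ 2) * (1 / (π * (1 - x ^ 2) * √(1 - 2 * x ^ 2)))) x := by
  refine ((((hasDerivAt_arcsinDivSqrt one_pos hx).const_mul 3).sub
    ((hasDerivAt_arcsinDivSqrt (by norm_num) hx).const_mul 2)).div_const _).congr_deriv ?_
  have : 0 < √(1 - 2 * x ^ 2) := sqrt_pos.2 (by linarith)
  have : 0 < 1 - x ^ 2 := by linarith
  have : 0 < 4 + x ^ 2 := by positivity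
  rw [show (1 : ℝ) ^ 2 * (1 - 2 * x ^ 2) + x ^ 2 = 1 - x ^ 2 by ring,
    show (2 / 3 : ℝ) ^ 2 * (1 - 2 * x ^ 2) + x ^ 2 = (4 + x ^ 2) / 9 by ring]
  field_simp
  ring

theorem wojcik_symmetric_weight_integral :
    ∫ x in (-(1 / Real.sqrt 2))..(1 / Real.sqrt 2),
      (3 * x^2 / (4 + x^2)) * (1 / (π * (1 - x^2) * Real.sqrt (1 - 2 * x^2))) = 1 / 5 := by
  have hle : -(1 / √2) ≤ 1 / √2 := by linarith [(by positivity : (0 : ℝ) < 1 / √2)]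
  have hcont : ContinuousOn wojcikPrimitive (Icc (-(1 / √2)) (1 / √2)) := by
    rw [Icc_neg_inv_sqrt_two_eq]
    exact continuousOn_wojcikPrimitive
  have hderiv : ∀ x ∈ Ioo (-(1 / √2)) (1 / √2), HasDerivAt wojcikPrimitive
      (3 * x ^ 2 / (4 + x ^ 2) * (1 / (π * (1 - x ^ 2) * √(1 - 2 * x ^ 2)))) x := by
    rw [Ioo_neg_inv_sqrt_two_eq]
    exact fun x hx => hasDerivAt_wojcikPrimitive hx
  have hnonneg : ∀ x ∈ Ioo (-(1 / √2)) (1 / √2),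
      0 ≤ 3 * x ^ 2 / (4 + x ^ 2) * (1 / (π * (1 - x ^ 2) * √(1 - 2 * x ^ 2))) := by
    rw [Ioo_neg_inv_sqrt_two_eq]
    intro x (hx : 2 * x ^ 2 < 1)
    have : 0 < 1 - x ^ 2 := by linarith
    positivity
  rw [integral_eq_sub_of_hasDerivAt_of_le hle hcont hderiv <|
    (intervalIntegrable_iff_integrableOn_Ioc_of_le hle).2 <|
      integrableOn_deriv_of_nonneg hcont hderiv hnonneg]
  simp only [wojcikPrimitive, arcsinDivSqrt_neg, arcsinDivSqrt_inv_sqrt_two]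
  field_simp
  ring
end

section
/- For 0 < a < 1, the second moment of the Konno density satisfies ∫_{−a}^{a} x² · sqrt(1−a²)/(π(1−x²)√(a²−x²)) dx = 1 − √(1−a²). -/
/-!
Since `x² = 1 - (1 - x²)`, the second moment is `1 - (√(1 - a²)/π) ∫ dx/√(a² - x²)`, once the
Konno density is known to have total mass one. Both integrals are evaluated by the fundamental
theorem of calculus, with antiderivatives `arcsin (x / a)` and
`arcsin (√(1 - a²) x / (a √(1 - x²))) / π`; each runs from `-π/2` to `π/2`.
-/

open Real Set MeasureTheory intervalIntegral

noncomputable def konnoDensity (a x : ℝ) : ℝ :=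
  √(1 - a ^ 2) / (π * (1 - x ^ 2) * √(a ^ 2 - x ^ 2))

/-- For integrands that blow up at the endpoints: nonnegativity alone gives integrability. -/
theorem intervalIntegrable_and_integral_eq_sub_of_hasDerivAt_of_nonneg {f F : ℝ → ℝ} {a b : ℝ}
    (hab : a ≤ b) (hcont : ContinuousOn F (Icc a b))
    (hderiv : ∀ x ∈ Ioo a b, HasDerivAt F (f x) x) (hpos : ∀ x ∈ Ioo a b, 0 ≤ f x) :
    IntervalIntegrable f volume a b ∧ ∫ x in a..b, f x = F b - F a := by
  have hint : IntervalIntegrable f volume a b := by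
    apply intervalIntegrable_deriv_of_nonneg (g := F) <;>
      simpa only [uIcc_of_le hab, min_eq_left hab, max_eq_right hab]
  exact ⟨hint, integral_eq_sub_of_hasDerivAt_of_le hab hcont hderiv hint⟩

theorem HasDerivAt.arcsin_of_sq_lt_one {g : ℝ → ℝ} {g' x : ℝ} (hg : HasDerivAt g g' x)
    (hx : g x ^ 2 < 1) : HasDerivAt (fun y => arcsin (g y)) (g' / √(1 - g x ^ 2)) x := by
  have h₁ : g x ≠ -1 := by rintro h; rw [h] at hx; norm_num at hx
  have h₂ : g x ≠ 1 := by rintro h; rw [h] at hx; norm_num at hx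
  exact ((hasDerivAt_arcsin h₁ h₂).comp x hg).congr_deriv (by ring)

theorem hasDerivAt_arcsin_div {a x : ℝ} (ha : 0 < a) (hx : x ^ 2 < a ^ 2) :
    HasDerivAt (fun y => arcsin (y / a)) (1 / √(a ^ 2 - x ^ 2)) x := by
  have hlt : (x / a) ^ 2 < 1 := by rwa [div_pow, div_lt_one (by positivity)]
  have hsqrt : √(1 - (x / a) ^ 2) = √(a ^ 2 - x ^ 2) / a := by
    rw [show 1 - (x / a) ^ 2 = (a ^ 2 - x ^ 2) / a ^ 2 by field_simp,
      sqrt_div' _ (sq_nonneg a), sqrt_sq ha.le]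
  refine (((hasDerivAt_id' x).div_const a).arcsin_of_sq_lt_one hlt).congr_deriv ?_
  rw [hsqrt]
  field_simp

theorem hasDerivAt_arcsin_mul_div_mul_sqrt {a b x : ℝ} (ha : 0 < a) (hb : b ^ 2 = 1 - a ^ 2)
    (hx : x ^ 2 < a ^ 2) :
    HasDerivAt (fun y => arcsin (b * y / (a * √(1 - y ^ 2))))
      (b / ((1 - x ^ 2) * √(a ^ 2 - x ^ 2))) x := by
  have hx1 : 0 < 1 - x ^ 2 := by nlinarith [sq_nonneg b]
  have hax : 0 < a ^ 2 - x ^ 2 := by linarith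
  set s := √(1 - x ^ 2) with hs_def
  set t := √(a ^ 2 - x ^ 2)
  have hs : 0 < s := sqrt_pos.mpr hx1
  have hs2 : s ^ 2 = 1 - x ^ 2 := sq_sqrt hx1.le
  have ht2 : t ^ 2 = a ^ 2 - x ^ 2 := sq_sqrt hax.le
  have hds : HasDerivAt (fun y => a * √(1 - y ^ 2)) (a * (-(2 * x) / (2 * s))) x :=
    ((((hasDerivAt_pow 2 x).const_sub 1).sqrt hx1.ne').const_mul a).congr_deriv (by simp [hs_def])
  have hdg : HasDerivAt (fun y => b * y / (a * √(1 - y ^ 2))) (b / (a * s ^ 3)) x := by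
    refine (((hasDerivAt_id' x).const_mul b).div hds (mul_pos ha hs).ne').congr_deriv ?_
    rw [← hs_def]
    field_simp
    linear_combination b * hs2
  have hlt : (b * x / (a * s)) ^ 2 < 1 := by
    rw [div_pow, div_lt_one (by positivity)]
    nlinarith
  -- `b² = 1 - a²` makes `1 - (b x / (a s))²` collapse to `(a² - x²) / (a s)²`.
  have hsqrt : √(1 - (b * x / (a * s)) ^ 2) = t / (a * s) := by
    rw [← sqrt_sq (by positivity : 0 ≤ t / (a * s))]
    congr 1
    field_simp
    linear_combination (-x ^ 2) * hb + a ^ 2 * hs2 - ht2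
  refine (hdg.arcsin_of_sq_lt_one hlt).congr_deriv ?_
  rw [hsqrt]
  field_simp
  rw [hs2]

theorem integral_one_div_sqrt_sq_sub_sq {a : ℝ} (ha : 0 < a) :
    IntervalIntegrable (fun x => 1 / √(a ^ 2 - x ^ 2)) volume (-a) a ∧
      ∫ x in (-a)..a, 1 / √(a ^ 2 - x ^ 2) = π := by
  have hcont : ContinuousOn (fun y => arcsin (y / a)) (Icc (-a) a) := by fun_prop
  obtain ⟨hint, heq⟩ := intervalIntegrable_and_integral_eq_sub_of_hasDerivAt_of_nonneg
    (by linarith) hcont (fun x hx => hasDerivAt_arcsin_div ha (sq_lt_sq' hx.1 hx.2))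
    (fun x _ => by positivity)
  refine ⟨hint, ?_⟩
  rw [heq, neg_div, div_self ha.ne', arcsin_one, arcsin_neg_one]
  ring

theorem integral_konnoDensity {a : ℝ} (ha : 0 < a) (ha1 : a < 1) :
    IntervalIntegrable (konnoDensity a) volume (-a) a ∧ ∫ x in (-a)..a, konnoDensity a x = 1 := by
  set b := √(1 - a ^ 2) with hb_def
  have hb : b ^ 2 = 1 - a ^ 2 := sq_sqrt (by nlinarith)
  have hb0 : b ≠ 0 := (sqrt_pos.mpr (by nlinarith)).ne'
  have h1x : ∀ x ∈ Icc (-a) a, 0 < 1 - x ^ 2 := fun x hx => by nlinarith [sq_le_sq' hx.1 hx.2]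
  have hcont : ContinuousOn (fun y => arcsin (b * y / (a * √(1 - y ^ 2))) / π) (Icc (-a) a) := by
    refine ContinuousOn.div_const (continuous_arcsin.comp_continuousOn
      (ContinuousOn.div (by fun_prop) (by fun_prop) fun x hx => ?_)) π
    exact mul_ne_zero ha.ne' (sqrt_pos.mpr (h1x x hx)).ne'
  have hderiv : ∀ x ∈ Ioo (-a) a, HasDerivAt (fun y => arcsin (b * y / (a * √(1 - y ^ 2))) / π)
      (konnoDensity a x) x := fun x hx =>
    ((hasDerivAt_arcsin_mul_div_mul_sqrt ha hb (sq_lt_sq' hx.1 hx.2)).div_const π).congr_deriv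
      (by rw [konnoDensity, ← hb_def, div_div]; congr 1; ring)
  have hpos : ∀ x ∈ Ioo (-a) a, 0 ≤ konnoDensity a x := fun x hx => by
    have := h1x x (Ioo_subset_Icc_self hx)
    unfold konnoDensity
    positivity
  obtain ⟨hint, heq⟩ := intervalIntegrable_and_integral_eq_sub_of_hasDerivAt_of_nonneg
    (by linarith) hcont hderiv hpos
  refine ⟨hint, ?_⟩
  rw [heq, neg_sq, ← hb_def, mul_neg, neg_div, mul_comm a b, div_self (mul_ne_zero hb0 ha.ne'),
    arcsin_one, arcsin_neg_one]
  field_simp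
  ring

theorem sq_mul_konnoDensity {a x : ℝ} (hx : x ^ 2 ≠ 1) :
    x ^ 2 * konnoDensity a x = konnoDensity a x - √(1 - a ^ 2) / π * (1 / √(a ^ 2 - x ^ 2)) := by
  have h : 1 - x ^ 2 ≠ 0 := sub_ne_zero.mpr (Ne.symm hx)
  unfold konnoDensity
  field_simp
  ring

theorem konno_second_moment (a : ℝ) (ha : 0 < a) (ha1 : a < 1) :
    ∫ x in (-a)..a,
      x ^ 2 * (Real.sqrt (1 - a ^ 2) / (π * (1 - x ^ 2) * Real.sqrt (a ^ 2 - x ^ 2)))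
      = 1 - Real.sqrt (1 - a ^ 2) := by
  obtain ⟨hint₁, h₁⟩ := integral_konnoDensity ha ha1
  obtain ⟨hint₂, h₂⟩ := integral_one_div_sqrt_sq_sub_sq ha
  have hsplit : EqOn (fun x => x ^ 2 * konnoDensity a x)
      (fun x => konnoDensity a x - √(1 - a ^ 2) / π * (1 / √(a ^ 2 - x ^ 2))) (uIcc (-a) a) := by
    intro x hx
    rw [uIcc_of_le (by linarith)] at hx
    exact sq_mul_konnoDensity (by nlinarith [sq_le_sq' hx.1 hx.2])
  change ∫ x in (-a)..a, x ^ 2 * konnoDensity a x = _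
  rw [integral_congr hsplit, integral_sub hint₁ (hint₂.const_mul _),
    intervalIntegral.integral_const_mul, h₁, h₂]
  field_simp
end
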